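/- arXiv:2505.20532 — 8 statements merged into one kernel-verified Lean document; each statement's English description precedes it below -/
import Mathlib

section
/- The geometric median GM(x_1,...,x_n) = argmin_{y ∈ ℝ^r} Σ_i ‖y - x_i‖ satisfies: for any target x* and any p ∈ (1/2, 1], ‖GM(x_1,...,x_n) - x*‖ ≤ (2p/(2p-1)) · Q(p), where Q(p) is the p-th sample quantile of the errors {‖x_i - x*‖}_{i=1}^n, i.e., a value such that at most pn of the errors are strictly less than Q(p) and at least pn of the errors are at most Q(p). -/
open Finset

/-- Geometric median robustness via sample quantiles. -/
theorem stmt_0 {r n : ℕ} (hn : 0 < n)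
    (x : Fin n → EuclideanSpace ℝ (Fin r))
    (xstar g : EuclideanSpace ℝ (Fin r))
    (hg : ∀ y : EuclideanSpace ℝ (Fin r), ∑ i, ‖g - x i‖ ≤ ∑ i, ‖y - x i‖)
    (p Q : ℝ) (hp : 1 / 2 < p) (hp1 : p ≤ 1)
    (hQlt : ((univ.filter fun i => ‖x i - xstar‖ < Q).card : ℝ) ≤ p * n)
    (hQle : p * n ≤ ((univ.filter fun i => ‖x i - xstar‖ ≤ Q).card : ℝ)) :
    ‖g - xstar‖ ≤ (2 * p) / (2 * p - 1) * Q := by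
  classical
  set S : Finset (Fin n) := univ.filter (fun i => ‖x i - xstar‖ ≤ Q) with hSdef
  set T : Finset (Fin n) := univ.filter (fun i => ¬ ‖x i - xstar‖ ≤ Q) with hTdef
  set s : ℝ := (S.card : ℝ) with hs
  set t : ℝ := (T.card : ℝ) with ht
  set D : ℝ := ‖g - xstar‖ with hD
  have hD0 : 0 ≤ D := norm_nonneg _
  have hn' : (0:ℝ) < n := by exact_mod_cast hn
  have hspos : 0 < s := lt_of_lt_of_le (by nlinarith) hQle
  have hSne : S.Nonempty := by
    rw [hs] at hspos
    exact card_pos.mp (by exact_mod_cast hspos)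
  obtain ⟨i0, hi0⟩ := hSne
  have hQ0 : 0 ≤ Q := le_trans (norm_nonneg _) (mem_filter.mp hi0).2
  have hc : S.card + T.card = n := by
    have h := Finset.card_filter_add_card_filter_not
      (s := (univ : Finset (Fin n))) (p := fun i => ‖x i - xstar‖ ≤ Q)
    rw [Finset.card_univ, Fintype.card_fin] at h
    exact h
  have hcard : s + t = n := by rw [hs, ht]; exact_mod_cast hc
  -- sum splits
  have e1 : ∑ i ∈ S, ‖g - x i‖ + ∑ i ∈ T, ‖g - x i‖ = ∑ i, ‖g - x i‖ :=
    Finset.sum_filter_add_sum_filter_not univ _ _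
  have e2 : ∑ i ∈ S, ‖xstar - x i‖ + ∑ i ∈ T, ‖xstar - x i‖ = ∑ i, ‖xstar - x i‖ :=
    Finset.sum_filter_add_sum_filter_not univ _ _
  -- bound on S
  have b1 : s * (D - Q) ≤ ∑ i ∈ S, ‖g - x i‖ := by
    have h := Finset.card_nsmul_le_sum S (fun i => ‖g - x i‖) (D - Q) (fun i hi => by
      have hiQ : ‖x i - xstar‖ ≤ Q := (mem_filter.mp hi).2
      have htri : D ≤ ‖g - x i‖ + ‖x i - xstar‖ := by
        have := dist_triangle g (x i) xstar
        simpa [dist_eq_norm, hD] using this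
      linarith)
    simpa [nsmul_eq_mul, hs] using h
  -- bound on T
  have b2 : ∑ i ∈ T, ‖xstar - x i‖ - t * D ≤ ∑ i ∈ T, ‖g - x i‖ := by
    have h : ∑ i ∈ T, (‖xstar - x i‖ - D) ≤ ∑ i ∈ T, ‖g - x i‖ := by
      apply Finset.sum_le_sum
      intro i hi
      have htri : ‖xstar - x i‖ ≤ ‖xstar - g‖ + ‖g - x i‖ := by
        have := dist_triangle xstar g (x i)
        simpa [dist_eq_norm] using this
      have hsymm : ‖xstar - g‖ = D := by rw [hD, norm_sub_rev]
      linarith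
    have hsum : ∑ i ∈ T, (‖xstar - x i‖ - D) = ∑ i ∈ T, ‖xstar - x i‖ - t * D := by
      rw [Finset.sum_sub_distrib, Finset.sum_const, nsmul_eq_mul, ht]
    linarith
  -- bound the S-part of xstar sums
  have b3 : ∑ i ∈ S, ‖xstar - x i‖ ≤ s * Q := by
    have h := Finset.sum_le_card_nsmul S (fun i => ‖xstar - x i‖) Q (fun i hi => by
      have := (mem_filter.mp hi).2
      rw [norm_sub_rev] at this
      exact this)
    simpa [nsmul_eq_mul, hs] using h
  have hgx : ∑ i, ‖g - x i‖ ≤ ∑ i, ‖xstar - x i‖ := hg xstar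
  -- key inequality
  have key : (2 * s - n) * D ≤ 2 * s * Q := by nlinarith [b1, b2, b3, hgx, e1, e2, hcard]
  have h2p : (0:ℝ) < 2 * p - 1 := by linarith
  have h2sn : (0:ℝ) < 2 * s - n := by nlinarith
  rw [div_mul_eq_mul_div, le_div_iff₀ h2p]
  -- (2p-1) D ≤ 2 p Q, via multiplying key by (2p-1) etc.
  have k2 : (2*p-1) * ((2*s-n) * D) ≤ (2*p-1) * (2*s*Q) :=
    mul_le_mul_of_nonneg_left key (le_of_lt h2p)
  have k3 : (2*p-1) * (2*s*Q) ≤ 2*p * ((2*s-n)*Q) := by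
    nlinarith [mul_nonneg hQ0 (by linarith : (0:ℝ) ≤ s - p * n)]
  have k4 : (2*p-1) * ((2*s-n) * D) ≤ 2*p*((2*s-n)*Q) := le_trans k2 k3
  have k5 : (D * (2*p-1)) * (2*s-n) ≤ (2*p*Q) * (2*s-n) := by
    have e : (D*(2*p-1))*(2*s-n) = (2*p-1)*((2*s-n)*D) := by ring
    have e' : (2*p*Q)*(2*s-n) = 2*p*((2*s-n)*Q) := by ring
    rw [e, e']; exact k4
  exact le_of_mul_le_mul_right k5 h2sn
end

section
/- Let x_1,...,x_n ∈ ℝ^r, x* ∈ ℝ^r, and suppose that for some α ∈ [0, 1/2) and some radius ρ ≥ 0, at least (1-α)n of the points satisfy ‖x_i - x*‖ ≤ ρ. Then the geometric median y* of x_1,...,x_n satisfies ‖y* - x*‖ ≤ 2(1-α)ρ/(1-2α). -/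
open Finset

/-- Geometric median robustness with an α fraction of outliers. -/
theorem stmt_1 {r n : ℕ} (hn : 0 < n)
    (x : Fin n → EuclideanSpace ℝ (Fin r))
    (xstar g : EuclideanSpace ℝ (Fin r))
    (hg : ∀ y : EuclideanSpace ℝ (Fin r), ∑ i, ‖g - x i‖ ≤ ∑ i, ‖y - x i‖)
    (α ρ : ℝ) (hα0 : 0 ≤ α) (hα : α < 1 / 2) (hρ : 0 ≤ ρ)
    (hgood : (1 - α) * n ≤ ((univ.filter fun i => ‖x i - xstar‖ ≤ ρ).card : ℝ)) :
    ‖g - xstar‖ ≤ 2 * (1 - α) * ρ / (1 - 2 * α) := by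
  classical
  set D := ‖g - xstar‖ with hDdef
  have hD0 : 0 ≤ D := norm_nonneg _
  set S := univ.filter fun i => ‖x i - xstar‖ ≤ ρ with hSdef
  set T := univ.filter fun i => ¬ ‖x i - xstar‖ ≤ ρ with hTdef
  have hcard : (S.card : ℝ) + T.card = n := by
    have h := Finset.card_filter_add_card_filter_not
      (s := (univ : Finset (Fin n))) (p := fun i => ‖x i - xstar‖ ≤ ρ)
    rw [Finset.card_univ, Fintype.card_fin] at h
    exact_mod_cast h
  have hScard : (S.card : ℝ) ≤ n := by
    have := Finset.card_filter_le (univ : Finset (Fin n)) (fun i => ‖x i - xstar‖ ≤ ρ)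
    rw [Finset.card_univ, Fintype.card_fin] at this
    exact_mod_cast this
  have h1 : ∀ i ∈ S, D - ρ ≤ ‖g - x i‖ := by
    intro i hi
    have hi' : ‖x i - xstar‖ ≤ ρ := (Finset.mem_filter.mp hi).2
    have h := norm_add_le (g - x i) (x i - xstar)
    rw [sub_add_sub_cancel] at h
    linarith
  have h2 : ∀ i ∈ T, ‖xstar - x i‖ - D ≤ ‖g - x i‖ := by
    intro i _
    have h := norm_add_le (xstar - g) (g - x i)
    rw [sub_add_sub_cancel] at h
    have hrev : ‖xstar - g‖ = D := norm_sub_rev _ _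
    linarith
  have hA : (S.card : ℝ) * (D - ρ) ≤ ∑ i ∈ S, ‖g - x i‖ := by
    have := Finset.card_nsmul_le_sum S (fun i => ‖g - x i‖) (D - ρ) h1
    simpa [nsmul_eq_mul] using this
  have hB : ∑ i ∈ T, ‖xstar - x i‖ - (T.card : ℝ) * D ≤ ∑ i ∈ T, ‖g - x i‖ := by
    have h := Finset.sum_le_sum h2
    have : ∑ i ∈ T, (‖xstar - x i‖ - D) =
        ∑ i ∈ T, ‖xstar - x i‖ - (T.card : ℝ) * D := by
      rw [Finset.sum_sub_distrib, Finset.sum_const, nsmul_eq_mul]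
    linarith
  have hC : ∑ i ∈ S, ‖xstar - x i‖ ≤ (S.card : ℝ) * ρ := by
    have := Finset.sum_le_card_nsmul S (fun i => ‖xstar - x i‖) ρ
      (fun i hi => by
        show ‖xstar - x i‖ ≤ ρ
        rw [norm_sub_rev]; exact (Finset.mem_filter.mp hi).2)
    simpa [nsmul_eq_mul] using this
  have hGsplit : ∑ i, ‖g - x i‖ = ∑ i ∈ S, ‖g - x i‖ + ∑ i ∈ T, ‖g - x i‖ :=
    (Finset.sum_filter_add_sum_filter_not univ _ _).symm
  have hXsplit : ∑ i, ‖xstar - x i‖ = ∑ i ∈ S, ‖xstar - x i‖ + ∑ i ∈ T, ‖xstar - x i‖ :=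
    (Finset.sum_filter_add_sum_filter_not univ _ _).symm
  have hmain := hg xstar
  rw [hGsplit, hXsplit] at hmain
  -- key inequality: D * (2 * S.card - n) ≤ 2 * S.card * ρ
  have hkey : D * (2 * (S.card : ℝ) - n) ≤ 2 * (S.card : ℝ) * ρ := by nlinarith
  have hden : (0:ℝ) < 1 - 2 * α := by linarith
  have hn' : (0:ℝ) < n := by exact_mod_cast hn
  rw [le_div_iff₀ hden]
  rcases le_or_gt ρ D with h | h
  · have hterm : 0 ≤ (D - ρ) * ((S.card : ℝ) - (1 - α) * n) :=
      mul_nonneg (by linarith) (by linarith)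
    nlinarith
  · nlinarith
end

section
/- The geometric median has breakdown point 1/2 in the following sense: if strictly more than n/2 of the points x_1,...,x_n lie in a ball of radius ρ around x*, then the geometric median of x_1,...,x_n lies within distance C·ρ of x* for some constant C depending only on the fraction of points in the ball (specifically C = 2p/(2p-1) when a fraction p > 1/2 of the points lie in the ball); in particular, the geometric median cannot be made arbitrarily far from x* by corrupting fewer than half the points if the remaining points stay within a fixed radius. -/
open Finset

/-- Breakdown point 1/2 of the geometric median: if a fraction p > 1/2 of the
points lie within distance ρ of x*, the geometric median is within (2p/(2p-1))ρ of x*. -/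
theorem stmt_2 {r n : ℕ} (hn : 0 < n)
    (x : Fin n → EuclideanSpace ℝ (Fin r))
    (xstar g : EuclideanSpace ℝ (Fin r))
    (hg : ∀ y : EuclideanSpace ℝ (Fin r), ∑ i, ‖g - x i‖ ≤ ∑ i, ‖y - x i‖)
    (ρ p : ℝ) (hρ : 0 ≤ ρ) (hp : 1 / 2 < p) (hp1 : p ≤ 1)
    (hfrac : p * n ≤ ((univ.filter fun i => ‖x i - xstar‖ ≤ ρ).card : ℝ)) :
    ‖g - xstar‖ ≤ (2 * p) / (2 * p - 1) * ρ := by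
  set s : Finset (Fin n) := univ.filter fun i => ‖x i - xstar‖ ≤ ρ with hs
  set t : Finset (Fin n) := univ \ s with ht
  set D : ℝ := ‖g - xstar‖ with hDdef
  have hD0 : 0 ≤ D := norm_nonneg _
  have hcardst : (s.card : ℝ) + (t.card : ℝ) = n := by
    have h1 : s.card + t.card = n := by
      rw [ht, Finset.card_sdiff_of_subset (Finset.subset_univ s)]
      have h2 := Finset.card_le_card (Finset.subset_univ s)
      simp only [Finset.card_univ, Fintype.card_fin] at h2 ⊢
      omega
    exact_mod_cast congrArg (Nat.cast : ℕ → ℝ) h1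
  set A : ℝ := ∑ i ∈ t, ‖x i - xstar‖ with hA
  -- lower bound on the objective at g
  have hlow : (s.card : ℝ) * (D - ρ) + (A - (t.card : ℝ) * D) ≤ ∑ i, ‖g - x i‖ := by
    have hsplit : ∑ i ∈ t, ‖g - x i‖ + ∑ i ∈ s, ‖g - x i‖ = ∑ i, ‖g - x i‖ :=
      Finset.sum_sdiff (Finset.subset_univ s)
    have h1 : (s.card : ℝ) * (D - ρ) ≤ ∑ i ∈ s, ‖g - x i‖ := by
      rw [← nsmul_eq_mul]
      apply Finset.card_nsmul_le_sum
      intro i hi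
      have hmem : ‖x i - xstar‖ ≤ ρ := (Finset.mem_filter.mp hi).2
      have htri : D ≤ ‖g - x i‖ + ‖x i - xstar‖ := by
        have : g - xstar = (g - x i) + (x i - xstar) := by abel
        calc D = ‖(g - x i) + (x i - xstar)‖ := by rw [hDdef, ← this]
          _ ≤ ‖g - x i‖ + ‖x i - xstar‖ := norm_add_le _ _
      linarith
    have h2 : A - (t.card : ℝ) * D ≤ ∑ i ∈ t, ‖g - x i‖ := by
      have h3 : ∀ i ∈ t, ‖x i - xstar‖ - D ≤ ‖g - x i‖ := by
        intro i _
        have htri : ‖x i - xstar‖ ≤ ‖g - x i‖ + D := by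
          have heq : x i - xstar = (x i - g) + (g - xstar) := by abel
          calc ‖x i - xstar‖ = ‖(x i - g) + (g - xstar)‖ := by rw [heq]
            _ ≤ ‖x i - g‖ + ‖g - xstar‖ := norm_add_le _ _
            _ = ‖g - x i‖ + D := by rw [norm_sub_rev]
        linarith
      calc A - (t.card : ℝ) * D = ∑ i ∈ t, (‖x i - xstar‖ - D) := by
            rw [Finset.sum_sub_distrib, Finset.sum_const, nsmul_eq_mul]
        _ ≤ ∑ i ∈ t, ‖g - x i‖ := Finset.sum_le_sum h3
    linarith
  -- upper bound on the objective at x*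
  have hup : ∑ i, ‖xstar - x i‖ ≤ (s.card : ℝ) * ρ + A := by
    have hsplit : ∑ i ∈ t, ‖xstar - x i‖ + ∑ i ∈ s, ‖xstar - x i‖ = ∑ i, ‖xstar - x i‖ :=
      Finset.sum_sdiff (Finset.subset_univ s)
    have h1 : ∑ i ∈ s, ‖xstar - x i‖ ≤ (s.card : ℝ) * ρ := by
      rw [← nsmul_eq_mul]
      apply Finset.sum_le_card_nsmul
      intro i hi
      have := (Finset.mem_filter.mp hi).2
      rwa [norm_sub_rev]
    have h2 : ∑ i ∈ t, ‖xstar - x i‖ = A := by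
      rw [hA]
      exact Finset.sum_congr rfl fun i _ => norm_sub_rev _ _
    linarith
  -- key inequality
  have hkey : (2 * (s.card : ℝ) - n) * D ≤ 2 * (s.card : ℝ) * ρ := by
    have := hg xstar
    have hnt : (t.card : ℝ) = n - s.card := by linarith
    nlinarith [hlow, hup, this]
  -- conclude
  have hpn : (1 : ℝ) ≤ n := by exact_mod_cast hn
  have h2m : (n : ℝ) < 2 * s.card := by nlinarith
  have hden : 0 < 2 * p - 1 := by linarith
  rw [div_mul_eq_mul_div, le_div_iff₀ hden]
  nlinarith [mul_nonneg (sub_nonneg.mpr hfrac) hD0, mul_nonneg (sub_nonneg.mpr hfrac) hρ,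
    mul_le_mul_of_nonneg_left hkey (le_of_lt hden), mul_pos (sub_pos.mpr h2m) hden]
end

section
/- Let A*_1,...,A*_r ∈ ℝ^r be distinct 'true centers' with minimal squared separation Δ = min_{a≠b} ‖A*_a - A*_b‖². Suppose points z_1,...,z_N (with N = Kr) are partitioned into true clusters C*_1,...,C*_r each of size K, and let ε = (1/K) Σ_{a=1}^r Σ_{j ∈ C*_a} ‖z_j - A*_a‖². If θ̄_1,...,θ̄_r are optimal k-means centers for z_1,...,z_N (minimizing Σ_j min_a ‖z_j - θ_a‖²) and 8√(7ε/Δ) ≤ 1, then for every b ∈ [r] there exists a ∈ [r] with ‖θ̄_a - A*_b‖ ≤ √(7ε). -/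
open Finset

/-- k-means center recovery: every true center has an optimal k-means center within √(7ε). -/
theorem stmt_4 {r K : ℕ} (hr : 0 < r) (hK : 0 < K)
    (A : Fin r → EuclideanSpace ℝ (Fin r))
    (z : Fin (K * r) → EuclideanSpace ℝ (Fin r))
    (σstar : Fin (K * r) → Fin r)
    (hsize : ∀ a, (univ.filter fun j => σstar j = a).card = K)
    (Δ : ℝ) (hΔ : IsLeast {d : ℝ | ∃ a b : Fin r, a ≠ b ∧ d = ‖A a - A b‖ ^ 2} Δ)
    (ε : ℝ) (hε : ε = (1 / K) * ∑ j, ‖z j - A (σstar j)‖ ^ 2)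
    (θ : Fin r → EuclideanSpace ℝ (Fin r))
    (hopt : ∀ θ' : Fin r → EuclideanSpace ℝ (Fin r),
      ∑ j, ⨅ a, ‖z j - θ a‖ ^ 2 ≤ ∑ j, ⨅ a, ‖z j - θ' a‖ ^ 2)
    (hcond : 8 * Real.sqrt (7 * ε / Δ) ≤ 1) :
    ∀ b, ∃ a, ‖θ a - A b‖ ≤ Real.sqrt (7 * ε) := by
  intro b
  by_contra hcon
  push_neg at hcon
  haveI : Nonempty (Fin r) := ⟨⟨0, hr⟩⟩
  have hεnn : 0 ≤ ε := by
    rw [hε]; positivity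
  set S := Real.sqrt (7 * ε) with hSdef
  have hSnn : 0 ≤ S := Real.sqrt_nonneg _
  have hS2 : S ^ 2 = 7 * ε := Real.sq_sqrt (by linarith)
  have hKpos : (0:ℝ) < (K:ℝ) := by exact_mod_cast hK
  have hsum : ∑ j, ‖z j - A (σstar j)‖ ^ 2 = (K:ℝ) * ε := by
    rw [hε]; field_simp
  have hbdd : ∀ (j : Fin (K*r)) (w : Fin r → EuclideanSpace ℝ (Fin r)),
      BddBelow (Set.range fun a => ‖z j - w a‖ ^ 2) := by
    intro j w
    exact ⟨0, by rintro x ⟨a, rfl⟩; positivity⟩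
  have hG0 : ∀ j, 0 ≤ ⨅ a, ‖z j - θ a‖ ^ 2 := fun j => le_ciInf fun a => by positivity
  have hopt' : ∑ j, ⨅ a, ‖z j - θ a‖ ^ 2 ≤ (K:ℝ) * ε := by
    calc ∑ j, ⨅ a, ‖z j - θ a‖ ^ 2 ≤ ∑ j, ⨅ a, ‖z j - A a‖ ^ 2 := hopt A
      _ ≤ ∑ j, ‖z j - A (σstar j)‖ ^ 2 :=
          Finset.sum_le_sum fun j _ => ciInf_le (hbdd j A) (σstar j)
      _ = (K:ℝ) * ε := hsum
  -- pointwise lower bound on cluster b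
  have hpt : ∀ j ∈ univ.filter fun j => σstar j = b,
      2/3 * S^2 - 3 * ‖z j - A (σstar j)‖^2 ≤ ⨅ a, ‖z j - θ a‖^2 := by
    intro j hj
    have hjb : σstar j = b := (Finset.mem_filter.mp hj).2
    rw [hjb]
    rcases le_or_gt ‖z j - A b‖ S with hle | hlt
    · refine le_ciInf fun a => ?_
      have htri : ‖θ a - A b‖ ≤ ‖θ a - z j‖ + ‖z j - A b‖ :=
        norm_sub_le_norm_sub_add_norm_sub _ _ _
      rw [norm_sub_rev (θ a) (z j)] at htri
      have hfar := hcon a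
      have hx : S - ‖z j - A b‖ ≤ ‖z j - θ a‖ := by linarith
      have hsq : (S - ‖z j - A b‖)^2 ≤ ‖z j - θ a‖^2 :=
        pow_le_pow_left₀ (by linarith) hx 2
      nlinarith [sq_nonneg (S - 3 * ‖z j - A b‖), sq_nonneg (‖z j - A b‖)]
    · have h0 := hG0 j
      nlinarith [norm_nonneg (z j - A b)]
  have hsub : ∑ j ∈ univ.filter (fun j => σstar j = b), ‖z j - A (σstar j)‖^2 ≤ (K:ℝ) * ε := by
    rw [← hsum]
    exact Finset.sum_le_sum_of_subset_of_nonneg (Finset.filter_subset _ _)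
      (fun j _ _ => by positivity)
  have hsubG : ∑ j ∈ univ.filter (fun j => σstar j = b), (⨅ a, ‖z j - θ a‖^2) ≤ (K:ℝ) * ε :=
    le_trans (Finset.sum_le_sum_of_subset_of_nonneg (Finset.filter_subset _ _)
      (fun j _ _ => hG0 j)) hopt'
  have h1 := Finset.sum_le_sum hpt
  have h2 : ∑ j ∈ univ.filter (fun j => σstar j = b),
      (2/3 * S^2 - 3 * ‖z j - A (σstar j)‖^2)
      = (K:ℝ) * (2/3 * S^2) - 3 * ∑ j ∈ univ.filter (fun j => σstar j = b),
          ‖z j - A (σstar j)‖^2 := by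
    rw [Finset.sum_sub_distrib, Finset.sum_const, hsize b, ← Finset.mul_sum,
      nsmul_eq_mul]
  -- conclude ε = 0
  have hε0 : ε = 0 := by
    nlinarith [h1, h2, hsub, hsubG]
  -- ε = 0 case: every point equals its true center, and opt cost is 0
  have hzero : ∀ j, ‖z j - A (σstar j)‖ ^ 2 = 0 := by
    have hsum0 : ∑ j, ‖z j - A (σstar j)‖ ^ 2 = 0 := by rw [hsum, hε0, mul_zero]
    intro j
    have := Finset.sum_eq_zero_iff_of_nonneg
      (fun j (_ : j ∈ (univ : Finset (Fin (K*r)))) => by positivity) |>.mp hsum0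
    exact this j (Finset.mem_univ j)
  have hGzero : ∀ j, (⨅ a, ‖z j - θ a‖ ^ 2) = 0 := by
    have hle0 : ∑ j, ⨅ a, ‖z j - θ a‖ ^ 2 ≤ 0 := by rw [hε0] at hopt'; linarith
    have hsum0 : ∑ j, ⨅ a, ‖z j - θ a‖ ^ 2 = 0 :=
      le_antisymm hle0 (Finset.sum_nonneg fun j _ => hG0 j)
    intro j
    exact Finset.sum_eq_zero_iff_of_nonneg
      (fun j _ => hG0 j) |>.mp hsum0 j (Finset.mem_univ j)
  -- pick a point in cluster b
  obtain ⟨j₀, hj₀⟩ := Finset.card_pos.mp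
    (by rw [hsize b]; exact hK : 0 < (univ.filter fun j => σstar j = b).card)
  have hj₀b : σstar j₀ = b := (Finset.mem_filter.mp hj₀).2
  have hzj₀ : z j₀ = A b := by
    have h2 := hzero j₀
    rw [hj₀b] at h2
    have h3 : ‖z j₀ - A b‖ = 0 := pow_eq_zero_iff (two_ne_zero) |>.mp h2
    rwa [norm_sub_eq_zero_iff] at h3
  -- the infimum is attained, giving some θ a equal to A b
  obtain ⟨a₀, -, ha₀⟩ := Finset.exists_min_image univ (fun a => ‖z j₀ - θ a‖ ^ 2)
    ⟨⟨0, hr⟩, Finset.mem_univ _⟩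
  have hmin : ‖z j₀ - θ a₀‖ ^ 2 ≤ ⨅ a, ‖z j₀ - θ a‖ ^ 2 :=
    le_ciInf fun a => ha₀ a (Finset.mem_univ a)
  have hle0 : ‖z j₀ - θ a₀‖ ^ 2 ≤ 0 := by rw [hGzero j₀] at hmin; exact hmin
  have h2 : ‖z j₀ - θ a₀‖ ^ 2 = 0 := le_antisymm hle0 (by positivity)
  have hz0 : ‖z j₀ - θ a₀‖ = 0 := pow_eq_zero_iff (two_ne_zero) |>.mp h2
  rw [norm_sub_eq_zero_iff] at hz0
  have hθa : θ a₀ = A b := hz0.symm.trans hzj₀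
  have hfin := hcon a₀
  rw [hθa, sub_self, norm_zero] at hfin
  exact absurd hfin (not_lt.mpr hSnn)
end

section
/- Combined robustness bound: Let C̄_a be a finite multiset of points in ℝ^r of cardinality m ≤ (1+δ)K containing a sub-multiset S ⊆ C̄_a with |S| ≥ pK points each satisfying ‖z - A*_a‖ ≤ Q for some Q ≥ 0, where p ∈ (1/2 + δ/2, 1] and δ ≥ 0. Then the geometric median ḡ of C̄_a satisfies ‖ḡ - A*_a‖ ≤ (2p/(2p - 1 - δ)) · Q. -/
open Finset

/-- Comparing the median `g` with the centre `a`: each of the points within `Q` of `a` is at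
least `‖g - a‖ - 2Q` farther from `g` than from `a`, each other point at most `‖g - a‖` closer. -/
theorem card_sub_mul_norm_sub_le_of_sum_norm_sub_le {ι E : Type*} [Fintype ι]
    [SeminormedAddCommGroup E] (x : ι → E) {a g : E} {Q : ℝ} (S : Finset ι)
    (hS : ∀ i ∈ S, ‖x i - a‖ ≤ Q) (hg : ∑ i, ‖g - x i‖ ≤ ∑ i, ‖a - x i‖) :
    (2 * #S - Fintype.card ι : ℝ) * ‖g - a‖ ≤ 2 * #S * Q := by
  classical
  have h_good : ∀ i ∈ S, ‖a - x i‖ + (‖g - a‖ - 2 * Q) ≤ ‖g - x i‖ := fun i hi => by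
    have := norm_sub_le_norm_sub_add_norm_sub g (x i) a
    have := hS i hi
    rw [norm_sub_rev a]
    linarith
  have h_bad : ∀ i ∈ Sᶜ, ‖a - x i‖ - ‖g - a‖ ≤ ‖g - x i‖ := fun i _ => by
    have := norm_sub_le_norm_sub_add_norm_sub a g (x i)
    rw [norm_sub_rev a g] at this
    linarith
  have h_sum := (add_le_add (sum_le_sum h_good) (sum_le_sum h_bad)).trans
    ((sum_add_sum_compl S fun i => ‖g - x i‖).le.trans hg)
  rw [← sum_add_sum_compl S] at h_sum
  simp only [sum_add_distrib, sum_sub_distrib, sum_const, nsmul_eq_mul, card_compl,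
    Nat.cast_sub (card_le_univ S)] at h_sum
  linarith

theorem le_div_mul_of_sub_mul_le {D Q s m K p c : ℝ} (hK : 0 < K) (hQ : 0 ≤ Q) (hm₀ : 0 ≤ m)
    (hm : m ≤ c * K) (hs : p * K ≤ s) (hp : c < 2 * p) (h : (2 * s - m) * D ≤ 2 * s * Q) :
    D ≤ 2 * p / (2 * p - c) * Q := by
  have hc : 0 ≤ c := nonneg_of_mul_nonneg_left (hm₀.trans hm) hK
  have hcp : 0 < 2 * p - c := by linarith
  have hsm : 0 < 2 * s - m := by nlinarith
  have hpm : p * m ≤ s * c := by nlinarith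
  rw [div_mul_eq_mul_div, le_div_iff₀ hcp]
  refine le_of_mul_le_mul_right ?_ hsm
  nlinarith

theorem stmt_10_general {r m K : ℕ} (hK : 0 < K)
    (x : Fin m → EuclideanSpace ℝ (Fin r)) (Aa g : EuclideanSpace ℝ (Fin r))
    (δ Q p : ℝ) (hQ : 0 ≤ Q)
    (hm : (m : ℝ) ≤ (1 + δ) * K)
    (S : Finset (Fin m)) (hScard : p * K ≤ (S.card : ℝ))
    (hSgood : ∀ i ∈ S, ‖x i - Aa‖ ≤ Q)
    (hp : 1 / 2 + δ / 2 < p)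
    (hg : ∀ y : EuclideanSpace ℝ (Fin r), ∑ i, ‖g - x i‖ ≤ ∑ i, ‖y - x i‖) :
    ‖g - Aa‖ ≤ (2 * p) / (2 * p - 1 - δ) * Q := by
  have h := card_sub_mul_norm_sub_le_of_sum_norm_sub_le x S hSgood (hg Aa)
  rw [Fintype.card_fin] at h
  rw [sub_sub]
  exact le_div_mul_of_sub_mul_le (by exact_mod_cast hK) hQ m.cast_nonneg hm hScard
    (by linarith) h

/-- Combined robustness bound for the geometric median of an estimated cluster. -/
theorem stmt_10 {r m K : ℕ} (hK : 0 < K)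
    (x : Fin m → EuclideanSpace ℝ (Fin r)) (Aa g : EuclideanSpace ℝ (Fin r))
    (δ Q p : ℝ) (hδ : 0 ≤ δ) (hQ : 0 ≤ Q)
    (hm : (m : ℝ) ≤ (1 + δ) * K)
    (S : Finset (Fin m)) (hScard : p * K ≤ (S.card : ℝ))
    (hSgood : ∀ i ∈ S, ‖x i - Aa‖ ≤ Q)
    (hp : 1 / 2 + δ / 2 < p) (hp1 : p ≤ 1)
    (hg : ∀ y : EuclideanSpace ℝ (Fin r), ∑ i, ‖g - x i‖ ≤ ∑ i, ‖y - x i‖) :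
    ‖g - Aa‖ ≤ (2 * p) / (2 * p - 1 - δ) * Q :=
  stmt_10_general hK x Aa g δ Q p hQ hm S hScard hSgood hp hg
end

section
/- Sign alignment correctness: Let A*_1,...,A*_r be orthonormal vectors in ℝ^r, and let u = s·A*_a + e and v = A*_a + f with s ∈ {+1,-1}, ‖e‖ ≤ η, ‖f‖ ≤ η, and η < 1/4. Then j = a maximizes |⟨u, A*_j + f_j⟩|/(‖u‖‖A*_j + f_j‖) over j ∈ [r] whenever each ‖f_j‖ ≤ η (with f_a = f), and the sign of ⟨u, v⟩ equals s; hence flipping u to make ⟨u, v⟩ > 0 recovers the estimator of A*_a with positive sign. -/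
/-!
Write `u = s • (A a + s • e)`. A vector `x + e` with `‖x‖ = 1` and `‖e‖ ≤ η` makes with `x` an
angle whose sine is at most `η`. So the cosine of the angle between `u` and `A a + f a` is at least
`(1 - η²) - η² = 1 - 2η²` in absolute value, with the sign of `s`, while for `j ≠ a` the
orthogonality of `A a` and `A j` bounds the cosine of the angle between `u` and `A j + f j`
by `2η`. Finally `2η < 1 - 2η²` for `η < 1/4`.
-/

open RealInnerProductSpace

section

variable {E : Type*} [SeminormedAddCommGroup E] [InnerProductSpace ℝ E] {x y : E}

lemma norm_sq_eq_inner_sq_add_norm_sub_inner_smul_sq (hx : ‖x‖ = 1) (u : E) :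
    ‖u‖ ^ 2 = ⟪x, u⟫ ^ 2 + ‖u - ⟪x, u⟫ • x‖ ^ 2 := by
  rw [norm_sub_sq_real, real_inner_smul_right, norm_smul, hx, Real.norm_eq_abs, mul_one, sq_abs,
    real_inner_comm u x]
  ring

lemma inner_eq_inner_mul_inner_add_inner_sub_inner_smul (hx : ‖x‖ = 1) (u w : E) :
    ⟪u, w⟫ = ⟪x, u⟫ * ⟪x, w⟫ + ⟪u - ⟪x, u⟫ • x, w - ⟪x, w⟫ • x⟫ := by
  have hxx : ⟪x, x⟫ = 1 := by rw [real_inner_self_eq_norm_sq, hx]; norm_num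
  simp only [inner_sub_left, inner_sub_right, real_inner_smul_left, real_inner_smul_right, hxx,
    real_inner_comm x u]
  ring

/-- The sine of the angle between `x + e` and the unit vector `x` is at most `‖e‖`. -/
lemma norm_sub_inner_smul_le_mul_norm (hx : ‖x‖ = 1) {e : E} {η : ℝ} (he : ‖e‖ ≤ η) :
    ‖(x + e) - ⟪x, x + e⟫ • x‖ ≤ η * ‖x + e‖ := by
  refine le_trans ?_ (mul_le_mul_of_nonneg_right he (norm_nonneg _))
  have hsum : ‖x + e‖ ^ 2 = 1 + 2 * ⟪x, e⟫ + ‖e‖ ^ 2 := by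
    rw [norm_add_sq_real, hx]; ring
  have hperp : ‖(x + e) - ⟪x, x + e⟫ • x‖ ^ 2 = ‖e‖ ^ 2 - ⟪x, e⟫ ^ 2 := by
    have hpyth := norm_sq_eq_inner_sq_add_norm_sub_inner_smul_sq hx (x + e)
    rw [inner_add_right, real_inner_self_eq_norm_sq, hx] at hpyth ⊢
    linarith
  -- `‖e‖²‖x + e‖² - (‖e‖² - ⟪x, e⟫²) = (⟪x, e⟫ + ‖e‖²)²`
  refine (sq_le_sq₀ (norm_nonneg _) (by positivity)).1 ?_
  rw [hperp, mul_pow, hsum]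
  nlinarith [sq_nonneg (⟪x, e⟫ + ‖e‖ ^ 2)]

lemma one_sub_le_inner_add (hx : ‖x‖ = 1) {e : E} {η : ℝ} (he : ‖e‖ ≤ η) :
    1 - η ≤ ⟪x, x + e⟫ := by
  have hxe : |⟪x, e⟫| ≤ ‖e‖ := by simpa only [hx, one_mul] using abs_real_inner_le_norm x e
  rw [inner_add_right, real_inner_self_eq_norm_sq, hx]
  linarith [neg_abs_le ⟪x, e⟫]

lemma one_sub_le_norm_add (hx : ‖x‖ = 1) {e : E} {η : ℝ} (he : ‖e‖ ≤ η) :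
    1 - η ≤ ‖x + e‖ := by
  have := real_inner_le_norm x (x + e)
  rw [hx, one_mul] at this
  linarith [one_sub_le_inner_add hx he]

variable {u w : E} {η : ℝ}

lemma one_sub_sq_mul_norm_sq_le_inner_sq (hx : ‖x‖ = 1) (hu : ‖u - ⟪x, u⟫ • x‖ ≤ η * ‖u‖) :
    (1 - η ^ 2) * ‖u‖ ^ 2 ≤ ⟪x, u⟫ ^ 2 := by
  have := pow_le_pow_left₀ (norm_nonneg _) hu 2
  linarith [norm_sq_eq_inner_sq_add_norm_sub_inner_smul_sq hx u]

lemma abs_inner_le_of_inner_eq_zero (hy : ‖y‖ = 1) (hxy : ⟪x, y⟫ = 0)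
    (hu : ‖u - ⟪x, u⟫ • x‖ ≤ η * ‖u‖) (hw : ‖w - ⟪y, w⟫ • y‖ ≤ η * ‖w‖) :
    |⟪u, w⟫| ≤ 2 * η * (‖u‖ * ‖w‖) := by
  have hw_eq : ⟪u, w⟫ = ⟪y, w⟫ * ⟪u - ⟪x, u⟫ • x, y⟫ + ⟪u, w - ⟪y, w⟫ • y⟫ := by
    simp only [inner_sub_left, inner_sub_right, real_inner_smul_left, real_inner_smul_right, hxy,
      real_inner_comm y u]
    ring
  have hy_perp : |⟪u - ⟪x, u⟫ • x, y⟫| ≤ η * ‖u‖ := by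
    simpa only [hy, mul_one] using (abs_real_inner_le_norm _ y).trans
      (mul_le_mul_of_nonneg_right hu (norm_nonneg y))
  have hw_perp : |⟪u, w - ⟪y, w⟫ • y⟫| ≤ ‖u‖ * (η * ‖w‖) :=
    (abs_real_inner_le_norm _ _).trans (mul_le_mul_of_nonneg_left hw (norm_nonneg u))
  have hyw : |⟪y, w⟫| ≤ ‖w‖ := by simpa only [hy, one_mul] using abs_real_inner_le_norm y w
  calc |⟪u, w⟫| ≤ |⟪y, w⟫| * |⟪u - ⟪x, u⟫ • x, y⟫| + |⟪u, w - ⟪y, w⟫ • y⟫| := by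
        rw [hw_eq, ← abs_mul]; exact abs_add_le _ _
    _ ≤ ‖w‖ * (η * ‖u‖) + ‖u‖ * (η * ‖w‖) := by gcongr
    _ = 2 * η * (‖u‖ * ‖w‖) := by ring

lemma one_sub_two_mul_sq_mul_le_inner (hx : ‖x‖ = 1) (hη : 0 ≤ η) (hη1 : η ≤ 1)
    (hu : ‖u - ⟪x, u⟫ • x‖ ≤ η * ‖u‖) (hw : ‖w - ⟪x, w⟫ • x‖ ≤ η * ‖w‖)
    (hsign : 0 ≤ ⟪x, u⟫ * ⟪x, w⟫) :
    (1 - 2 * η ^ 2) * (‖u‖ * ‖w‖) ≤ ⟪u, w⟫ := by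
  have hη2 : 0 ≤ 1 - η ^ 2 := by nlinarith
  have hparallel : (1 - η ^ 2) * (‖u‖ * ‖w‖) ≤ ⟪x, u⟫ * ⟪x, w⟫ := by
    refine (sq_le_sq₀ (by positivity) hsign).1 ?_
    calc ((1 - η ^ 2) * (‖u‖ * ‖w‖)) ^ 2 = ((1 - η ^ 2) * ‖u‖ ^ 2) * ((1 - η ^ 2) * ‖w‖ ^ 2) := by
          ring
      _ ≤ ⟪x, u⟫ ^ 2 * ⟪x, w⟫ ^ 2 :=
          mul_le_mul (one_sub_sq_mul_norm_sq_le_inner_sq hx hu)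
            (one_sub_sq_mul_norm_sq_le_inner_sq hx hw) (by positivity) (sq_nonneg _)
      _ = (⟪x, u⟫ * ⟪x, w⟫) ^ 2 := by ring
  have hperp : |⟪u - ⟪x, u⟫ • x, w - ⟪x, w⟫ • x⟫| ≤ η * ‖u‖ * (η * ‖w‖) :=
    (abs_real_inner_le_norm _ _).trans (mul_le_mul hu hw (norm_nonneg _) (by positivity))
  rw [inner_eq_inner_mul_inner_add_inner_sub_inner_smul hx u w]
  nlinarith [neg_abs_le ⟪u - ⟪x, u⟫ • x, w - ⟪x, w⟫ • x⟫]

variable {e f g : E}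

lemma abs_inner_div_lt_of_inner_eq_zero (hx : ‖x‖ = 1) (hy : ‖y‖ = 1) (hxy : ⟪x, y⟫ = 0)
    (hη : 2 * η + 2 * η ^ 2 < 1) (he : ‖e‖ ≤ η) (hf : ‖f‖ ≤ η) (hg : ‖g‖ ≤ η) :
    |⟪x + e, y + g⟫| / (‖x + e‖ * ‖y + g‖) < |⟪x + e, x + f⟫| / (‖x + e‖ * ‖x + f‖) := by
  have hη0 : 0 ≤ η := (norm_nonneg e).trans he
  have hη1 : η < 1 := by nlinarith
  have hxf_pos : 0 < ‖x + e‖ * ‖x + f‖ := mul_pos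
    (by linarith [one_sub_le_norm_add hx he]) (by linarith [one_sub_le_norm_add hx hf])
  have hsign : 0 ≤ ⟪x, x + e⟫ * ⟪x, x + f⟫ := mul_nonneg
    (by linarith [one_sub_le_inner_add hx he]) (by linarith [one_sub_le_inner_add hx hf])
  have hlower := one_sub_two_mul_sq_mul_le_inner hx hη0 hη1.le
    (norm_sub_inner_smul_le_mul_norm hx he) (norm_sub_inner_smul_le_mul_norm hx hf) hsign
  have hupper := abs_inner_le_of_inner_eq_zero hy hxy
    (norm_sub_inner_smul_le_mul_norm hx he) (norm_sub_inner_smul_le_mul_norm hy hg)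
  calc |⟪x + e, y + g⟫| / (‖x + e‖ * ‖y + g‖) ≤ 2 * η :=
        div_le_of_le_mul₀ (by positivity) (by positivity) hupper
    _ < 1 - 2 * η ^ 2 := by linarith
    _ ≤ |⟪x + e, x + f⟫| / (‖x + e‖ * ‖x + f‖) :=
        (le_div_iff₀ hxf_pos).2 (hlower.trans (le_abs_self _))

lemma inner_add_add_pos (hx : ‖x‖ = 1) (hη : 2 * η ^ 2 < 1) (he : ‖e‖ ≤ η) (hf : ‖f‖ ≤ η) :
    0 < ⟪x + e, x + f⟫ := by
  have hη0 : 0 ≤ η := (norm_nonneg e).trans he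
  have hη1 : η < 1 := by nlinarith
  have hsign : 0 ≤ ⟪x, x + e⟫ * ⟪x, x + f⟫ := mul_nonneg
    (by linarith [one_sub_le_inner_add hx he]) (by linarith [one_sub_le_inner_add hx hf])
  refine lt_of_lt_of_le ?_ (one_sub_two_mul_sq_mul_le_inner hx hη0 hη1.le
    (norm_sub_inner_smul_le_mul_norm hx he) (norm_sub_inner_smul_le_mul_norm hx hf) hsign)
  exact mul_pos (by linarith) (mul_pos (by linarith [one_sub_le_norm_add hx he])
    (by linarith [one_sub_le_norm_add hx hf]))

end

/-- Sign alignment correctness: the benchmark column with largest normalized absolute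
inner product is the matching one, and the inner product has sign s. -/
theorem stmt_11 {r : ℕ} (A : Fin r → EuclideanSpace ℝ (Fin r))
    (hA : Orthonormal ℝ A) (a : Fin r) (s : ℝ) (hs : s = 1 ∨ s = -1)
    (e : EuclideanSpace ℝ (Fin r)) (fv : Fin r → EuclideanSpace ℝ (Fin r))
    (η : ℝ) (hη : η < 1 / 4) (he : ‖e‖ ≤ η) (hf : ∀ j, ‖fv j‖ ≤ η)
    (u v : EuclideanSpace ℝ (Fin r)) (hu : u = s • A a + e) (hv : v = A a + fv a) :
    (∀ j, j ≠ a →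
      |(inner ℝ u (A j + fv j) : ℝ)| / (‖u‖ * ‖A j + fv j‖) <
        |(inner ℝ u (A a + fv a) : ℝ)| / (‖u‖ * ‖A a + fv a‖)) ∧
    0 < s * (inner ℝ u v : ℝ) := by
  have hη0 : 0 ≤ η := (norm_nonneg e).trans he
  have hss : s * s = 1 := by rcases hs with rfl | rfl <;> norm_num
  have hs_abs : |s| = 1 := by rcases hs with rfl | rfl <;> norm_num
  have hse : ‖s • e‖ ≤ η := by rwa [norm_smul, Real.norm_eq_abs, hs_abs, one_mul]
  have hsu : u = s • (A a + s • e) := by rw [hu, smul_add, smul_smul, hss, one_smul]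
  subst hsu hv
  simp only [real_inner_smul_left, norm_smul, Real.norm_eq_abs, abs_mul, hs_abs, one_mul,
    ← mul_assoc, hss]
  refine ⟨fun j hj => ?_, inner_add_add_pos (hA.1 a) (by nlinarith) hse (hf a)⟩
  simpa only [mul_assoc] using abs_inner_div_lt_of_inner_eq_zero (hA.1 a) (hA.1 j) (hA.2 hj.symm)
    (by nlinarith) hse (hf a) (hf j)
end

section
/- Center-proximity contradiction lemma: Let C*_b ⊆ {z_1,...,z_N} with |C*_b| = K and Σ_{j∈C*_b}‖z_j - A*_b‖² ≤ Kε. If θ_1,...,θ_r ∈ ℝ^r all satisfy ‖θ_a - A*_b‖ ≥ √(7ε), then Σ_{j∈C*_b} min_a ‖z_j - θ_a‖² ≥ (3/2)Kε. Consequently, if the total k-means objective over all points is at most Kε (achieved by the true solution), then for every b at least one optimal center θ̄_a must satisfy ‖θ̄_a - A*_b‖ < √(7ε). -/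
open Finset

/-- Center-proximity contradiction lemma: if all centers are √(7ε)-far from A*_b,
the objective on C*_b is at least (3/2)Kε; consequently, any centers whose total
k-means objective is at most Kε have some center within √(7ε) of A*_b. -/
theorem stmt_15 {r N K : ℕ} (hr : 0 < r) (hK : 0 < K)
    (z : Fin N → EuclideanSpace ℝ (Fin r)) (Ab : EuclideanSpace ℝ (Fin r))
    (C : Finset (Fin N)) (hC : C.card = K)
    (ε : ℝ) (hε : 0 < ε)
    (herr : ∑ j ∈ C, ‖z j - Ab‖ ^ 2 ≤ K * ε) :
    (∀ θ : Fin r → EuclideanSpace ℝ (Fin r),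
        (∀ a, Real.sqrt (7 * ε) ≤ ‖θ a - Ab‖) →
        (3 / 2) * (K * ε) ≤ ∑ j ∈ C, ⨅ a, ‖z j - θ a‖ ^ 2) ∧
      (∀ θ : Fin r → EuclideanSpace ℝ (Fin r),
        ∑ j, ⨅ a, ‖z j - θ a‖ ^ 2 ≤ K * ε →
        ∃ a, ‖θ a - Ab‖ < Real.sqrt (7 * ε)) := by
  haveI : Nonempty (Fin r) := ⟨⟨0, hr⟩⟩
  have h7ε : (0:ℝ) ≤ 7 * ε := by linarith
  have hKε : (0:ℝ) < K * ε := by positivity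
  have key : ∀ θ : Fin r → EuclideanSpace ℝ (Fin r),
      (∀ a, Real.sqrt (7 * ε) ≤ ‖θ a - Ab‖) →
      (3 / 2) * (K * ε) ≤ ∑ j ∈ C, ⨅ a, ‖z j - θ a‖ ^ 2 := by
    intro θ hθ
    have hpt : ∀ j ∈ C, 7 * ε / 2 - ‖z j - Ab‖ ^ 2 ≤ ⨅ a, ‖z j - θ a‖ ^ 2 := by
      intro j _
      apply le_ciInf
      intro a
      have h1 : ‖θ a - Ab‖ ≤ ‖z j - θ a‖ + ‖z j - Ab‖ := by
        have h := norm_add_le (θ a - z j) (z j - Ab)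
        rw [norm_sub_rev (θ a) (z j)] at h
        simpa using h
      have h2 : 7 * ε ≤ ‖θ a - Ab‖ ^ 2 := by
        have := hθ a
        nlinarith [Real.sq_sqrt h7ε, Real.sqrt_nonneg (7 * ε), norm_nonneg (θ a - Ab)]
      have h3 : ‖θ a - Ab‖ ^ 2 ≤ (‖z j - θ a‖ + ‖z j - Ab‖) ^ 2 :=
        pow_le_pow_left₀ (norm_nonneg _) h1 2
      nlinarith [sq_nonneg (‖z j - θ a‖ - ‖z j - Ab‖)]
    have hsum := Finset.sum_le_sum hpt
    rw [Finset.sum_sub_distrib, Finset.sum_const, hC, nsmul_eq_mul] at hsum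
    linarith
  refine ⟨key, ?_⟩
  intro θ hsum
  by_contra h
  push_neg at h
  have h1 := key θ h
  have h2 : ∑ j ∈ C, ⨅ a, ‖z j - θ a‖ ^ 2 ≤ ∑ j, ⨅ a, ‖z j - θ a‖ ^ 2 := by
    apply Finset.sum_le_sum_of_subset_of_nonneg (Finset.subset_univ C)
    intro i _ _
    exact le_ciInf fun a => sq_nonneg _
  linarith
end

section
/- Approximate geometric median robustness: if ĝ satisfies Σ_i ‖ĝ - x_i‖ ≤ (1+γ) · min_y Σ_i ‖y - x_i‖, then for any p ∈ (1/2, 1], ‖ĝ - x*‖ ≤ (2p/(2p-1))·Q(p; {‖x_i - x*‖}) + γ·(Σ_i ‖x_i - x*‖)/((2p-1)n), where Q(p;·) is the p-th sample quantile. -/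
set_option maxHeartbeats 1000000


open Finset

/-- Robustness of a (1+γ)-approximate geometric median. -/
theorem stmt_17 {r n : ℕ} (hn : 0 < n)
    (x : Fin n → EuclideanSpace ℝ (Fin r)) (xstar ghat : EuclideanSpace ℝ (Fin r))
    (γ : ℝ) (hγ : 0 ≤ γ)
    (hg : ∀ y : EuclideanSpace ℝ (Fin r),
      ∑ i, ‖ghat - x i‖ ≤ (1 + γ) * ∑ i, ‖y - x i‖)
    (p Q : ℝ) (hp : 1 / 2 < p) (hp1 : p ≤ 1)
    (hQlt : ((univ.filter fun i => ‖x i - xstar‖ < Q).card : ℝ) ≤ p * n)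
    (hQle : p * n ≤ ((univ.filter fun i => ‖x i - xstar‖ ≤ Q).card : ℝ)) :
    ‖ghat - xstar‖ ≤ (2 * p) / (2 * p - 1) * Q
      + γ * (∑ i, ‖x i - xstar‖) / ((2 * p - 1) * n) := by
  classical
  set D := ‖ghat - xstar‖ with hDdef
  set A : Finset (Fin n) := univ.filter (fun i => ‖x i - xstar‖ ≤ Q) with hAdef
  set B : Finset (Fin n) := univ.filter (fun i => ¬ ‖x i - xstar‖ ≤ Q) with hBdef
  set s : ℝ := (A.card : ℝ) with hsdef
  set c : ℝ := (B.card : ℝ) with hcdef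
  have hns : (0:ℝ) < n := by exact_mod_cast hn
  have hps : p * n ≤ s := hQle
  have hsc : s + c = n := by
    have h2 : A.card + B.card = n := by
      rw [hAdef, hBdef, Finset.card_filter_add_card_filter_not,
        Finset.card_univ, Fintype.card_fin]
    rw [hsdef, hcdef]
    exact_mod_cast h2
  have hApos : 0 < A.card := by
    have hpn : (0:ℝ) < p * n := by nlinarith
    have h2 : (0:ℝ) < s := lt_of_lt_of_le hpn hps
    rw [hsdef] at h2
    exact_mod_cast h2
  have hQ0 : 0 ≤ Q := by
    obtain ⟨i, hi⟩ := Finset.card_pos.mp hApos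
    have h2 := (Finset.mem_filter.mp hi).2
    exact le_trans (norm_nonneg _) h2
  set Tin : ℝ := ∑ i ∈ A, ‖x i - xstar‖ with hTin
  set Tout : ℝ := ∑ i ∈ B, ‖x i - xstar‖ with hTout
  set T : ℝ := ∑ i, ‖x i - xstar‖ with hT
  have hTsplit : Tin + Tout = T :=
    Finset.sum_filter_add_sum_filter_not univ _ _
  have hToutnn : 0 ≤ Tout := Finset.sum_nonneg fun i _ => norm_nonneg _
  have hTinnn : 0 ≤ Tin := Finset.sum_nonneg fun i _ => norm_nonneg _
  -- upper bound on total objective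
  have hgx : ∑ i, ‖ghat - x i‖ ≤ (1 + γ) * T := by
    have := hg xstar
    have h2 : ∑ i, ‖xstar - x i‖ = T := by
      simp [hT, norm_sub_rev]
    linarith [this.trans_eq (by rw [h2])]
  have hsplit : ∑ i ∈ A, ‖ghat - x i‖ + ∑ i ∈ B, ‖ghat - x i‖ = ∑ i, ‖ghat - x i‖ :=
    Finset.sum_filter_add_sum_filter_not univ _ _
  have f1 : s * D - Tin ≤ ∑ i ∈ A, ‖ghat - x i‖ := by
    have h : ∑ i ∈ A, (D - ‖x i - xstar‖) ≤ ∑ i ∈ A, ‖ghat - x i‖ := by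
      refine Finset.sum_le_sum fun i _ => ?_
      have := norm_sub_le_norm_sub_add_norm_sub ghat (x i) xstar
      have h2 : ‖x i - xstar‖ = ‖x i - xstar‖ := rfl
      -- D = ‖ghat - xstar‖ ≤ ‖ghat - x i‖ + ‖x i - xstar‖
      have h3 : D ≤ ‖ghat - x i‖ + ‖x i - xstar‖ := this
      linarith
    have h4 : ∑ i ∈ A, (D - ‖x i - xstar‖) = s * D - Tin := by
      rw [Finset.sum_sub_distrib, Finset.sum_const, nsmul_eq_mul]
    linarith [h.trans_eq rfl, h4 ▸ h]
  have f2 : Tout - c * D ≤ ∑ i ∈ B, ‖ghat - x i‖ := by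
    have h : ∑ i ∈ B, (‖x i - xstar‖ - D) ≤ ∑ i ∈ B, ‖ghat - x i‖ := by
      refine Finset.sum_le_sum fun i _ => ?_
      have h3 : ‖x i - xstar‖ ≤ ‖x i - ghat‖ + ‖ghat - xstar‖ :=
        norm_sub_le_norm_sub_add_norm_sub _ _ _
      have h4 : ‖x i - ghat‖ = ‖ghat - x i‖ := norm_sub_rev _ _
      rw [h4] at h3
      linarith
    have h4 : ∑ i ∈ B, (‖x i - xstar‖ - D) = Tout - c * D := by
      rw [Finset.sum_sub_distrib, Finset.sum_const, nsmul_eq_mul]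
    linarith [h4 ▸ h]
  have f3 : Tin ≤ s * Q := by
    have h : Tin ≤ ∑ _i ∈ A, Q := by
      refine Finset.sum_le_sum fun i hi => ?_
      exact (Finset.mem_filter.mp hi).2
    simpa [Finset.sum_const, nsmul_eq_mul] using h
  have hDnn : 0 ≤ D := norm_nonneg _
  have key : D * (2 * s - n) ≤ 2 * s * Q + γ * T := by nlinarith [hTsplit]
  have h2sn : (2 * p - 1) * n ≤ 2 * s - n := by nlinarith
  have hposa : (0:ℝ) < (2 * p - 1) * n := by nlinarith
  have h2snpos : (0:ℝ) < 2 * s - n := lt_of_lt_of_le hposa h2sn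
  have hspn : 0 ≤ s - p * n := by linarith
  have main : D * ((2 * p - 1) * n) ≤ 2 * p * Q * n + γ * T := by
    nlinarith [mul_le_mul_of_nonneg_right key (le_of_lt hposa),
      mul_nonneg hQ0 hspn, mul_nonneg (mul_nonneg hγ (by linarith : (0:ℝ) ≤ T)) hspn,
      mul_nonneg hDnn (le_of_lt h2snpos)]
  have hfin : 2 * p / (2 * p - 1) * Q + γ * T / ((2 * p - 1) * n)
      = (2 * p * Q * n + γ * T) / ((2 * p - 1) * n) := by
    have hane : (2 * p - 1) ≠ 0 := by nlinarith
    have hnne : (n:ℝ) ≠ 0 := ne_of_gt hns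
    field_simp
  rw [hfin, le_div_iff₀ hposa]
  linarith [main]
end
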